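/- For every n ≥ 1 and every threshold k with 1 ≤ k ≤ k_n, where k_n = ∏_{i=1}^n p_i (the product of the first n primes), Player 1 wins the finite-time pushdown game (G_n, col_n, k) of the lower-bound family defined in the context. (Together with the fact that Player 0 wins the infinite game (G_n, col_n) and that k_n ≥ 2^n is exponential in the cubic root of |Q_n|, this gives a lower bound on thresholds for which the finite-time pushdown game is equivalent to the pushdown parity game.) -/

import Mathlib

namespace FDGames


/-- Score of color `c` read over the reversed word (head = last letter). -/
def scAux {V : Type*} (col : V → ℕ) (c : ℕ) : List V → ℕ
  | [] => 0
  | v :: w =>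
    if c < col v then scAux col c w
    else if col v = c then scAux col c w + 1
    else 0

/-- `Sc col c w` : the scoring function `Sc_c` of McNaughton, for the word `w`. -/
def Sc {V : Type*} (col : V → ℕ) (c : ℕ) (w : List V) : ℕ :=
  scAux col c w.reverse

/-- `MaxSc col c w` : maximum of `Sc_c` over all prefixes of `w`. -/
def MaxSc {V : Type*} (col : V → ℕ) (c : ℕ) (w : List V) : ℕ :=
  (Finset.range (w.length + 1)).sup fun m => Sc col c (w.take m)

/-- A game graph: ownership partition, edge relation, initial vertex, and
every vertex has at least one successor. -/
structure GameGraph (V : Type*) where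
  own : V → Fin 2
  E : V → V → Prop
  vin : V
  succ : ∀ v, ∃ v', E v v'

/-- An infinite play: starts at the initial vertex and follows edges. -/
def IsPlay {V : Type*} (G : GameGraph V) (ρ : ℕ → V) : Prop :=
  ρ 0 = G.vin ∧ ∀ m, G.E (ρ m) (ρ (m + 1))

/-- A play consistent with the strategy `σ` of Player `i`; the strategy gets the
history (the vertices strictly before the current one) and the current vertex. -/
def ConsistentPlay {V : Type*} (G : GameGraph V) (i : Fin 2)
    (σ : List V → V → V) (ρ : ℕ → V) : Prop :=
  IsPlay G ρ ∧ ∀ m, G.own (ρ m) = i → ρ (m + 1) = σ ((List.range m).map ρ) (ρ m)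

/-- The minimal color seen infinitely often along `ρ`. -/
noncomputable def minInfCol {V : Type*} (col : V → ℕ) (ρ : ℕ → V) : ℕ :=
  sInf {c | ∀ N, ∃ m, N ≤ m ∧ col (ρ m) = c}

/-- The play `ρ` is winning for Player `i` in the (min-) parity game. -/
def WinningPlay {V : Type*} (col : V → ℕ) (i : Fin 2) (ρ : ℕ → V) : Prop :=
  minInfCol col ρ % 2 = (i : ℕ)

/-- A (legal) strategy always moves along edges. -/
def IsStrategy {V : Type*} (G : GameGraph V) (σ : List V → V → V) : Prop :=
  ∀ h v, G.E v (σ h v)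

/-- A positional strategy only depends on the current vertex. -/
def Positional {V : Type*} (σ : List V → V → V) : Prop :=
  ∀ h h' v, σ h v = σ h' v

/-- A winning strategy for Player `i` in the parity game `(G, col)`. -/
def WinningStrategy {V : Type*} (G : GameGraph V) (col : V → ℕ) (i : Fin 2)
    (σ : List V → V → V) : Prop :=
  IsStrategy G σ ∧ ∀ ρ, ConsistentPlay G i σ ρ → WinningPlay col i ρ

/-- Player `i` wins the parity game `(G, col)`. -/
def WinsGame {V : Type*} (G : GameGraph V) (col : V → ℕ) (i : Fin 2) : Prop :=
  ∃ σ, WinningStrategy G col i σ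

/-- A finite play prefix `w` is consistent with the strategy `σ` of Player `i`. -/
def FinConsistent {V : Type*} (G : GameGraph V) (i : Fin 2)
    (σ : List V → V → V) (w : List V) : Prop :=
  ∀ m, m + 1 < w.length → G.own (w.getD m G.vin) = i →
    w.getD (m + 1) G.vin = σ (w.take m) (w.getD m G.vin)

/-- A finite path from the initial vertex. -/
def FinPath {V : Type*} (G : GameGraph V) (w : List V) : Prop :=
  w.head? = some G.vin ∧ w.Chain' G.E

/-- A play of the finite-time parity game `(G, col, k)` (with colors in `[n]`):
a finite path from the initial vertex along which some score reaches the
threshold `k` exactly at the last vertex. -/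
def FTPlay {V : Type*} (G : GameGraph V) (col : V → ℕ) (n k : ℕ) (w : List V) : Prop :=
  FinPath G w ∧ (∃ c < n, MaxSc col c w = k) ∧ ∀ c < n, MaxSc col c w.dropLast < k

/-- The finished finite-time play `w` is winning for Player `i`. -/
def FTWinningPlay {V : Type*} (col : V → ℕ) (n k : ℕ) (i : Fin 2) (w : List V) : Prop :=
  ∃ c < n, MaxSc col c w = k ∧ c % 2 = (i : ℕ)

/-- Player `i` wins the finite-time parity game `(G, col, k)`. -/
def FTWins {V : Type*} (G : GameGraph V) (col : V → ℕ) (n k : ℕ) (i : Fin 2) : Prop :=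
  ∃ σ, IsStrategy G σ ∧
    ∀ w, FTPlay G col n k w → FinConsistent G i σ w → FTWinningPlay col n k i w

/-- A pushdown system.  The bottom-of-stack symbol `⊥` is kept implicit: a stack
content is the list of symbols from `Γ` strictly above `⊥` (top = head), and the
top-of-stack symbol read by a transition is an `Option Γ` (`none` = `⊥`).  Since
`⊥` can neither be written nor deleted, a transition reading a symbol of `Γ`
rewrites it to at most two symbols of `Γ`, and a transition reading `⊥` writes at
most one symbol of `Γ` above `⊥`.  The system is deadlock-free. -/
structure PDS (Q Γ : Type*) where
  qin : Q
  Δ : Set (Q × Option Γ × Q × List Γ)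
  bound2 : ∀ q A p α, (q, A, p, α) ∈ Δ → α.length ≤ 2
  bound1 : ∀ q p α, (q, (none : Option Γ), p, α) ∈ Δ → α.length ≤ 1
  df : ∀ q A, ∃ q' α, (q, A, q', α) ∈ Δ

/-- Configurations: a state together with the stack content above `⊥`. -/
abbrev Config (Q Γ : Type*) := Q × List Γ

/-- The stack height of a configuration. -/
def confSh {Q Γ : Type*} (v : Config Q Γ) : ℕ := v.2.length

/-- One step of the pushdown system between configurations. -/
def PDS.step {Q Γ : Type*} (P : PDS Q Γ) (u v : Config Q Γ) : Prop :=
  (u.2 = [] ∧ (u.1, (none : Option Γ), v.1, v.2) ∈ P.Δ) ∨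
  (∃ a rest α, u.2 = a :: rest ∧ (u.1, some a, v.1, α) ∈ P.Δ ∧ v.2 = α ++ rest)

/-- The pushdown game graph induced by a PDS and a partition of its states. -/
def PDS.graph {Q Γ : Type*} (P : PDS Q Γ) (own : Q → Fin 2) :
    GameGraph (Config Q Γ) where
  own := fun v => own v.1
  E := P.step
  vin := (P.qin, [])
  succ := by
    rintro ⟨q, _ | ⟨a, rest⟩⟩
    · obtain ⟨q', α, h⟩ := P.df q none
      exact ⟨(q', α), Or.inl ⟨rfl, h⟩⟩
    · obtain ⟨q', α, h⟩ := P.df q (some a)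
      exact ⟨(q', α ++ rest), Or.inr ⟨a, rest, α, rfl, h, rfl⟩⟩

/-- The stair positions of a sequence of stack heights. -/
def stairPositions (hs : List ℕ) : Finset ℕ :=
  (Finset.range hs.length).filter fun m =>
    ∀ m' < hs.length, m ≤ m' → hs.getD m 0 ≤ hs.getD m' 0

/-- For a word of (color, stack height) pairs, the position where `lastBump`
starts, i.e. `l + 1` for the second largest stair position `l` (and `0` if there
is no such position). -/
def bumpStart (w : List (ℕ × ℕ)) : ℕ :=
  ((Finset.range (w.length - 1)).filter
    fun l => (w.getD l (0, 0)).2 ≤ ((w.getLast?).getD (0, 0)).2).sup (· + 1)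

theorem bumpStart_lt {w : List (ℕ × ℕ)} (h : w ≠ []) : bumpStart w < w.length := by
  have h1 : 0 < w.length := List.length_pos_iff.mpr h
  have h2 : bumpStart w ≤ w.length - 1 := by
    apply Finset.sup_le
    intro l hl
    have := Finset.mem_range.mp (Finset.mem_filter.mp hl).1
    omega
  omega

/-- The minimal color occurring in a word of (color, stack height) pairs. -/
def minColList (w : List (ℕ × ℕ)) : ℕ := WithTop.untopD 0 ((w.map Prod.fst).minimum)

/-- The stair-scoring function `StairSc_c`, on words of (color, stack height)
pairs.  `w.take (bumpStart w)` is `Reset(w)` and `w.drop (bumpStart w)` is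
`lastBump(w)`. -/
def StairSc (c : ℕ) (w : List (ℕ × ℕ)) : ℕ :=
  if h : w = [] then 0
  else if c < minColList (w.drop (bumpStart w)) then StairSc c (w.take (bumpStart w))
  else if minColList (w.drop (bumpStart w)) = c then StairSc c (w.take (bumpStart w)) + 1
  else 0
termination_by w.length
decreasing_by
  all_goals
    have hlt := bumpStart_lt h
    simp only [List.length_take]
    omega

/-- Maximum of `StairSc_c` over all prefixes. -/
def MaxStairSc (c : ℕ) (w : List (ℕ × ℕ)) : ℕ :=
  (Finset.range (w.length + 1)).sup fun m => StairSc c (w.take m)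

/-- The word of (color, stack height) pairs associated to a path of
configurations. -/
def toCH {Q Γ : Type*} (col : Q → ℕ) (w : List (Config Q Γ)) : List (ℕ × ℕ) :=
  w.map fun v => (col v.1, v.2.length)

/-- A play of the finite-time pushdown game `(G, col, k)` (with colors in `[n]`):
a finite path from the initial configuration along which some stair-score reaches
the threshold `k` exactly at the last configuration. -/
def FTPDPlay {Q Γ : Type*} (P : PDS Q Γ) (own : Q → Fin 2) (col : Q → ℕ)
    (n k : ℕ) (w : List (Config Q Γ)) : Prop :=
  FinPath (P.graph own) w ∧ (∃ c < n, MaxStairSc c (toCH col w) = k) ∧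
    ∀ c < n, MaxStairSc c (toCH col w.dropLast) < k

/-- The finished finite-time pushdown play `w` is winning for Player `i`. -/
def FTPDWinningPlay {Q Γ : Type*} (col : Q → ℕ) (n k : ℕ) (i : Fin 2)
    (w : List (Config Q Γ)) : Prop :=
  ∃ c < n, MaxStairSc c (toCH col w) = k ∧ c % 2 = (i : ℕ)

/-- Player `i` wins the finite-time pushdown game `(G, col, k)`. -/
def FTPDWins {Q Γ : Type*} (P : PDS Q Γ) (own : Q → Fin 2) (col : Q → ℕ)
    (n k : ℕ) (i : Fin 2) : Prop :=
  ∃ σ, IsStrategy (P.graph own) σ ∧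
    ∀ w, FTPDPlay P own col n k w → FinConsistent (P.graph own) i σ w →
      FTPDWinningPlay col n k i w

/-- The `i`-th prime number (`nthPrime 0 = 2`). -/
noncomputable def nthPrime (i : ℕ) : ℕ := Nat.nth Nat.Prime i

theorem nthPrime_pos (i : ℕ) : 0 < nthPrime i := (Nat.prime_nth_prime i).pos

/-- The states of the lower-bound pushdown system `P_n`:
`qin`, `qbox = q_□` and the counting states `cnt i j = q_{i+1}^j` with
`j < p_{i+1}`. -/
inductive QLB (n : ℕ) where
  | qin : QLB n
  | qbox : QLB n
  | cnt : (i : Fin n) → (j : Fin (nthPrime i)) → QLB n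

/-- The transition relation `Δ_n` of the lower-bound pushdown system. -/
def lbDelta (n : ℕ) : Set (QLB n × Option Unit × QLB n × List Unit) :=
  { t |
    t = (QLB.qin, some (), QLB.qin, [(), ()]) ∨
    t = (QLB.qin, none, QLB.qin, [()]) ∨
    t = (QLB.qin, some (), QLB.qbox, [(), ()]) ∨
    t = (QLB.qin, none, QLB.qbox, [()]) ∨
    (∃ i : Fin n, t = (QLB.qbox, some (), QLB.cnt i ⟨0, nthPrime_pos i⟩, [()])) ∨
    (∃ (i : Fin n) (j : Fin (nthPrime i)),
      t = (QLB.cnt i j, some (),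
           QLB.cnt i ⟨((j : ℕ) + 1) % nthPrime i, Nat.mod_lt _ (nthPrime_pos i)⟩, [])) ∨
    (∃ q : QLB n, q ≠ QLB.qin ∧ t = (q, none, q, [])) }

/-- The lower-bound pushdown system `P_n` (for `n ≥ 1`). -/
def lbPDS (n : ℕ) (hn : 1 ≤ n) : PDS (QLB n) Unit where
  qin := QLB.qin
  Δ := lbDelta n
  bound2 := by
    intro q A p α h
    simp only [lbDelta, Set.mem_setOf_eq, Prod.mk.injEq] at h
    rcases h with ⟨-,-,-,rfl⟩|⟨-,-,-,rfl⟩|⟨-,-,-,rfl⟩|⟨-,-,-,rfl⟩|⟨i,-,-,-,rfl⟩|⟨i,j,-,-,-,rfl⟩|⟨q',hq,-,-,-,rfl⟩ <;> simp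
  bound1 := by
    intro q p α h
    simp only [lbDelta, Set.mem_setOf_eq, Prod.mk.injEq, reduceCtorEq,
      false_and, and_false, false_or, exists_false, or_false] at h
    rcases h with ⟨-,-,-,rfl⟩|⟨-,-,-,rfl⟩|⟨q',hq,-,-,-,rfl⟩ <;> simp
  df := by
    intro q A
    rcases A with _ | u
    · rcases q with _ | _ | ⟨i, j⟩
      · exact ⟨QLB.qin, [()], Or.inr (Or.inl rfl)⟩
      · refine ⟨QLB.qbox, [], ?_⟩
        refine Or.inr (Or.inr (Or.inr (Or.inr (Or.inr (Or.inr ⟨QLB.qbox, ?_, rfl⟩)))))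
        exact fun h => nomatch h
      · refine ⟨QLB.cnt i j, [], ?_⟩
        refine Or.inr (Or.inr (Or.inr (Or.inr (Or.inr (Or.inr ⟨QLB.cnt i j, ?_, rfl⟩)))))
        exact fun h => nomatch h
    · rcases q with _ | _ | ⟨i, j⟩
      · exact ⟨QLB.qin, [(), ()], Or.inl rfl⟩
      · exact ⟨QLB.cnt ⟨0, hn⟩ ⟨0, nthPrime_pos _⟩, [()],
          Or.inr (Or.inr (Or.inr (Or.inr (Or.inl ⟨⟨0, hn⟩, rfl⟩))))⟩
      · exact ⟨QLB.cnt i ⟨((j : ℕ) + 1) % nthPrime i, Nat.mod_lt _ (nthPrime_pos i)⟩, [],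
          Or.inr (Or.inr (Or.inr (Or.inr (Or.inr (Or.inl ⟨i, j, rfl⟩)))))⟩

/-- The partition of the lower-bound game: Player 1 owns exactly `q_□`. -/
def lbOwn {n : ℕ} : QLB n → Fin 2
  | QLB.qbox => 1
  | _ => 0

/-- The coloring of the lower-bound game: `col (q_i^0) = 0`, all other states
have color `1`. -/
def lbCol {n : ℕ} : QLB n → ℕ
  | QLB.cnt _ j => if (j : ℕ) = 0 then 0 else 1
  | _ => 1

/-!
Player 0 climbs with `q_in` and at some height `h` hands over at `q_□`. Player 1 then picks a
prime `p_i` not dividing `h`, which exists as long as `h < k_n`; the counter pops down to `⊥`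
and loops there forever in the state `q_i^{h mod p_i}`, of color `1`. Along such a play the only
bump of minimal color `0` in a stair decomposition is the one through the peak `q_i^0`: while
popping, the last bump reaches back over the peak, and in the loop every bump is a single
vertex of color `1`. So the color-`0` stair score never exceeds `1`, whereas the color-`1`
score is `1` at the initial vertex and `h + 1` at `q_□`; a threshold `k ≤ k_n` thus forces
`h < k_n`, and color `1` is the one to reach `k`.
-/

section StairScore

theorem bumpStart_append_append_singleton {Y Z : List (ℕ × ℕ)} {v : ℕ × ℕ}
    (hY : ∀ y ∈ Y.getLast?, y.2 ≤ v.2) (hZ : ∀ z ∈ Z, v.2 < z.2) :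
    bumpStart (Y ++ Z ++ [v]) = Y.length := by
  rw [bumpStart, List.getLast?_concat, Option.getD_some]
  simp only [List.length_append, List.length_singleton, Nat.add_sub_cancel]
  apply le_antisymm
  · refine Finset.sup_le fun l hl => ?_
    obtain ⟨hl, hle⟩ := Finset.mem_filter.mp hl
    rw [Finset.mem_range] at hl
    by_contra! hlY
    rw [List.getD_append _ _ _ _ (by simpa using hl), List.getD_append_right _ _ _ _ (by omega),
      List.getD_eq_getElem _ _ (by omega)] at hle
    exact (hZ _ (List.getElem_mem _)).not_ge hle
  · rcases List.eq_nil_or_concat Y with rfl | ⟨Y', y, rfl⟩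
    · simp
    · refine Finset.le_sup_of_le (b := Y'.length) (Finset.mem_filter.mpr ⟨?_, ?_⟩) (by simp)
      · simp only [List.concat_eq_append, List.length_append, List.length_singleton,
          Finset.mem_range]
        omega
      · rw [List.concat_eq_append, List.append_assoc, List.append_assoc,
          List.getD_append_right _ _ _ _ le_rfl]
        simpa using hY

theorem minColList_singleton (v : ℕ × ℕ) : minColList [v] = v.1 := rfl

theorem minColList_eq_zero_of_mem {w : List (ℕ × ℕ)} {h : ℕ} (hw : (0, h) ∈ w) :
    minColList w = 0 := by
  have hle : (w.map Prod.fst).minimum ≤ (0 : ℕ) :=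
    List.minimum_le_of_mem' (List.mem_map_of_mem (f := Prod.fst) hw)
  obtain ⟨m, hm, hm0⟩ := WithTop.le_coe_iff.mp hle
  rw [minColList, hm, Nat.le_zero.mp hm0]
  rfl

theorem StairSc_append_append_singleton (c : ℕ) {Y Z : List (ℕ × ℕ)} {v : ℕ × ℕ}
    (hY : ∀ y ∈ Y.getLast?, y.2 ≤ v.2) (hZ : ∀ z ∈ Z, v.2 < z.2) :
    StairSc c (Y ++ Z ++ [v]) =
      if c < minColList (Z ++ [v]) then StairSc c Y
      else if minColList (Z ++ [v]) = c then StairSc c Y + 1 else 0 := by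
  rw [StairSc, dif_neg (by simp), bumpStart_append_append_singleton hY hZ, List.append_assoc,
    List.drop_left, List.take_left]

theorem StairSc_append_singleton_of_le (c : ℕ) {X : List (ℕ × ℕ)} {v : ℕ × ℕ}
    (hX : ∀ x ∈ X.getLast?, x.2 ≤ v.2) :
    StairSc c (X ++ [v]) =
      if c < v.1 then StairSc c X else if v.1 = c then StairSc c X + 1 else 0 := by
  have h := StairSc_append_append_singleton c (Z := []) hX (by simp)
  rwa [List.append_nil, List.nil_append, minColList_singleton] at h

theorem StairSc_le_StairSc_take_bumpStart_add_one (c : ℕ) (w : List (ℕ × ℕ)) :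
    StairSc c w ≤ StairSc c (w.take (bumpStart w)) + 1 := by
  rw [StairSc]
  split_ifs <;> simp

theorem StairSc_le_MaxStairSc {c : ℕ} {v w : List (ℕ × ℕ)} (h : v <+: w) :
    StairSc c v ≤ MaxStairSc c w := by
  rw [List.prefix_iff_eq_take.mp h]
  exact Finset.le_sup (f := fun m => StairSc c (w.take m))
    (Finset.mem_range.mpr (Nat.lt_succ_of_le h.length_le))

theorem MaxStairSc_le_iff {c K : ℕ} {w : List (ℕ × ℕ)} :
    MaxStairSc c w ≤ K ↔ ∀ v, v <+: w → StairSc c v ≤ K :=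
  ⟨fun h _ hv => (StairSc_le_MaxStairSc hv).trans h,
    fun h => Finset.sup_le fun m _ => h _ (List.take_prefix m w)⟩

theorem MaxStairSc_mono {c : ℕ} {v w : List (ℕ × ℕ)} (h : v <+: w) :
    MaxStairSc c v ≤ MaxStairSc c w :=
  MaxStairSc_le_iff.mpr fun _ hu => StairSc_le_MaxStairSc (hu.trans h)

theorem MaxStairSc_le_MaxStairSc_dropLast_add_one (c : ℕ) (w : List (ℕ × ℕ)) :
    MaxStairSc c w ≤ MaxStairSc c w.dropLast + 1 := by
  rcases List.eq_nil_or_concat w with rfl | ⟨X, x, rfl⟩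
  · simp [MaxStairSc]
  rw [List.concat_eq_append]
  refine MaxStairSc_le_iff.mpr fun v hv => ?_
  rw [List.dropLast_concat]
  rcases List.prefix_concat_iff.mp hv with rfl | hv
  · have hb := bumpStart_lt (w := X ++ [x]) (by simp)
    have hpre : (X ++ [x]).take (bumpStart (X ++ [x])) <+: X := by
      rw [List.take_append_of_le_length (by simp at hb; omega)]
      exact List.take_prefix _ _
    exact (StairSc_le_StairSc_take_bumpStart_add_one c _).trans
      (Nat.succ_le_succ (StairSc_le_MaxStairSc hpre))
  · exact (StairSc_le_MaxStairSc hv).trans (Nat.le_succ _)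

def risingWord (m : ℕ) : List (ℕ × ℕ) := (List.range m).map fun t => (1, t)

theorem risingWord_succ (m : ℕ) : risingWord (m + 1) = risingWord m ++ [(1, m)] := by
  simp [risingWord, List.range_succ]

theorem StairSc_risingWord (c m : ℕ) : StairSc c (risingWord m) = if c = 1 then m else 0 := by
  induction m with
  | zero => simp [risingWord, StairSc]
  | succ m ih =>
    have hlast : ∀ x ∈ (risingWord m).getLast?, x.2 ≤ m := by
      intro x hx
      obtain ⟨t, ht, rfl⟩ := List.mem_map.mp (List.mem_of_getLast? hx)
      simpa using (List.mem_range.mp ht).le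
    rw [risingWord_succ, StairSc_append_singleton_of_le c hlast, ih]
    split_ifs <;> omega

-- `h - s` truncates: after `h` steps the word stays at height `0`.
def peakWord (h : ℕ) (f : ℕ → ℕ) (t : ℕ) : List (ℕ × ℕ) :=
  risingWord (h + 1) ++ (List.range (t + 1)).map fun s => (f s, h - s)

theorem peakWord_eq_append (h : ℕ) (f : ℕ → ℕ) (t : ℕ) :
    peakWord h f t =
      risingWord (h + 1) ++ (List.range t).map (fun s => (f s, h - s)) ++ [(f t, h - t)] := by
  simp [peakWord, List.range_succ]

theorem StairSc_zero_peakWord_of_le {h t : ℕ} {f : ℕ → ℕ} (hf0 : f 0 = 0) (ht : t ≤ h) :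
    StairSc 0 (peakWord h f t) = 1 := by
  set Z := (List.range t).map (fun s => ((1 : ℕ), h - t + 1 + s)) ++
    (List.range t).map (fun s => (f s, h - s))
  have hsplit : peakWord h f t = risingWord (h - t + 1) ++ Z ++ [(f t, h - t)] := by
    rw [peakWord_eq_append, show h + 1 = (h - t + 1) + t by omega, risingWord, List.range_add]
    simp [Z, risingWord, Function.comp_def]
  have hY : ∀ y ∈ (risingWord (h - t + 1)).getLast?, y.2 ≤ h - t := by
    intro y hy
    obtain ⟨s, hs, rfl⟩ := List.mem_map.mp (List.mem_of_getLast? hy)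
    simpa [Nat.lt_succ_iff] using hs
  have hZ : ∀ z ∈ Z, h - t < z.2 := by
    simp only [Z, List.mem_append, List.mem_map, List.mem_range]
    rintro z (⟨s, hs, rfl⟩ | ⟨s, hs, rfl⟩) <;> simp only <;> omega
  have hpeak : (0, h) ∈ Z ++ [(f t, h - t)] := by
    rcases Nat.eq_zero_or_pos t with rfl | ht0
    · simp [hf0]
    · refine List.mem_append_left _ (List.mem_append_right _ (List.mem_map.mpr ⟨0, ?_, ?_⟩))
      · simpa using ht0
      · simp [hf0]
  rw [hsplit, StairSc_append_append_singleton 0 hY hZ, minColList_eq_zero_of_mem hpeak,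
    StairSc_risingWord]
  simp

theorem StairSc_zero_peakWord {h : ℕ} {f : ℕ → ℕ} (hf0 : f 0 = 0)
    (hf : ∀ s, h < s → f s ≠ 0) (t : ℕ) : StairSc 0 (peakWord h f t) = 1 := by
  induction t with
  | zero => exact StairSc_zero_peakWord_of_le hf0 (Nat.zero_le h)
  | succ t ih =>
    rcases Nat.lt_or_ge t h with ht | ht
    · exact StairSc_zero_peakWord_of_le hf0 ht
    · have hlast : ∀ x ∈ (peakWord h f t).getLast?, x.2 ≤ h - (t + 1) := by
        rw [peakWord_eq_append, List.getLast?_concat]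
        rintro x ⟨⟩
        omega
      have hstep : peakWord h f (t + 1) = peakWord h f t ++ [(f (t + 1), h - (t + 1))] := by
        rw [peakWord_eq_append h f (t + 1), peakWord, List.range_succ, List.map_append,
          List.append_assoc]
      rw [hstep, StairSc_append_singleton_of_le 0 hlast,
        if_pos (Nat.pos_of_ne_zero (hf _ (by omega))), ih]

end StairScore

section FinitePlays

variable {V : Type*} {G : GameGraph V}

theorem FinPath.of_prefix {u w : List V} (hw : FinPath G w) (hu : u <+: w) (hne : u ≠ []) :
    FinPath G u := by
  refine ⟨?_, hw.2.prefix hu⟩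
  obtain ⟨a, u', rfl⟩ := List.exists_cons_of_ne_nil hne
  obtain ⟨w', rfl⟩ := hu
  simpa using hw.1

theorem FinPath.step_of_getLast? {u : List V} {v x : V} (h : FinPath G (u ++ [v]))
    (hx : u.getLast? = some x) : G.E x v :=
  (List.isChain_append.mp h.2).2.2 x hx v rfl

theorem FinConsistent.of_prefix {i : Fin 2} {σ : List V → V → V} {u w : List V}
    (hw : FinConsistent G i σ w) (hu : u <+: w) : FinConsistent G i σ u := by
  obtain ⟨w', rfl⟩ := hu
  intro m hm hown
  have h := hw m (by simp; omega) (by rwa [List.getD_append _ _ _ m (by omega)])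
  rwa [List.getD_append _ _ _ m (by omega), List.getD_append _ _ _ (m + 1) hm,
    List.take_append_of_le_length (by omega)] at h

theorem FinConsistent.eq_of_getLast? {i : Fin 2} {σ : List V → V → V} {u : List V} {v x : V}
    (h : FinConsistent G i σ (u ++ [v])) (hx : u.getLast? = some x) (hown : G.own x = i) :
    v = σ u.dropLast x := by
  have hlen : 0 < u.length := List.length_pos_iff.mpr (by rintro rfl; simp at hx)
  have hxu : u.getD (u.length - 1) G.vin = x := by
    rw [List.getLast?_eq_getElem?] at hx
    simp [List.getD_eq_getElem?_getD, hx]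
  have h := h (u.length - 1) (by simp; omega)
    (by rwa [List.getD_append _ _ _ (u.length - 1) (by omega), hxu])
  rwa [List.getD_append _ _ _ (u.length - 1) (by omega), hxu,
    List.getD_append_right _ _ _ (u.length - 1 + 1) (by omega),
    show u.length - 1 + 1 - u.length = 0 by omega, List.take_append_of_le_length (by omega),
    ← List.dropLast_eq_take] at h

end FinitePlays

theorem exists_nthPrime_not_dvd {n h : ℕ} (h0 : 0 < h)
    (hlt : h < ∏ i ∈ Finset.range n, nthPrime i) : ∃ i : Fin n, ¬ nthPrime i ∣ h := by
  by_contra! hdvd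
  have hprod : ∏ p ∈ (Finset.range n).image nthPrime, p ∣ h := by
    refine Finset.prod_primes_dvd h ?_ ?_ <;> simp only [Finset.mem_image, Finset.mem_range] <;>
      rintro _ ⟨i, hi, rfl⟩
    · exact (Nat.prime_nth_prime i).prime
    · exact hdvd ⟨i, hi⟩
  have hinj : Function.Injective nthPrime := Nat.nth_injective Nat.infinite_setOfPred_prime
  rw [Finset.prod_image fun _ _ _ _ hij => hinj hij] at hprod
  exact (Nat.le_of_dvd h0 hprod).not_gt hlt

theorem toCH_dropLast {Q Γ : Type*} (col : Q → ℕ) (w : List (Config Q Γ)) :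
    toCH col w.dropLast = (toCH col w).dropLast :=
  List.map_dropLast

theorem StairSc_toCH_le_MaxStairSc {Q Γ : Type*} {col : Q → ℕ} {c : ℕ}
    {u w : List (Config Q Γ)} (h : u <+: w) :
    StairSc c (toCH col u) ≤ MaxStairSc c (toCH col w) :=
  StairSc_le_MaxStairSc (h.map _)

section LowerBoundGame

variable (n : ℕ) (hn : 1 ≤ n)

noncomputable def lbChoice (h : ℕ) : Fin n :=
  if H : ∃ i : Fin n, ¬ nthPrime i ∣ h then H.choose else ⟨0, hn⟩

theorem lbChoice_not_dvd {h : ℕ} (h0 : 0 < h) (hlt : h < ∏ i ∈ Finset.range n, nthPrime i) :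
    ¬ nthPrime (lbChoice n hn h) ∣ h := by
  have H := exists_nthPrime_not_dvd h0 hlt
  rw [lbChoice, dif_pos H]
  exact H.choose_spec

open Classical in
noncomputable def lbStrategy (_ : List (Config (QLB n) Unit)) (v : Config (QLB n) Unit) :
    Config (QLB n) Unit :=
  if v.1 = QLB.qbox ∧ v.2 ≠ [] then
    (QLB.cnt (lbChoice n hn v.2.length) ⟨0, nthPrime_pos _⟩, v.2)
  else Classical.choose (((lbPDS n hn).graph lbOwn).succ v)

theorem lbStrategy_isStrategy : IsStrategy ((lbPDS n hn).graph lbOwn) (lbStrategy n hn) := by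
  intro _ v
  rw [lbStrategy]
  split_ifs with hv
  · obtain ⟨q, _ | ⟨a, rest⟩⟩ := v
    · exact absurd rfl hv.2
    · obtain rfl : q = QLB.qbox := hv.1
      exact Or.inr ⟨a, rest, [()], rfl,
        Or.inr (Or.inr (Or.inr (Or.inr (Or.inl ⟨_, rfl⟩)))), rfl⟩
  · exact Classical.choose_spec (((lbPDS n hn).graph lbOwn).succ v)

-- `s` steps after entering the counter for `p_i` at height `h`; `min` and the truncated `h - s`
-- model the loop at `⊥`.
noncomputable def countConfig (i : Fin n) (h s : ℕ) : Config (QLB n) Unit :=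
  (QLB.cnt i ⟨min s h % nthPrime i, Nat.mod_lt _ (nthPrime_pos i)⟩, List.replicate (h - s) ())

variable {n hn}

theorem lbStrategy_qbox (H : List (Config (QLB n) Unit)) {s : List Unit} (hs : s ≠ []) :
    lbStrategy n hn H (QLB.qbox, s) = countConfig n (lbChoice n hn s.length) s.length 0 := by
  rw [lbStrategy, if_pos ⟨rfl, hs⟩, countConfig, Nat.sub_zero,
    ← List.eq_replicate_iff.mpr ⟨rfl, fun _ _ => rfl⟩]
  rfl

theorem lbStep_qin {m : ℕ} {v : Config (QLB n) Unit}
    (h : (lbPDS n hn).step (QLB.qin, List.replicate m ()) v) :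
    v = (QLB.qin, List.replicate (m + 1) ()) ∨ v = (QLB.qbox, List.replicate (m + 1) ()) := by
  obtain ⟨q, s⟩ := v
  cases m <;> simp [PDS.step, lbPDS, lbDelta, List.replicate_succ] at h ⊢ <;> grind

theorem lbStep_countConfig {i : Fin n} {h s : ℕ} {v : Config (QLB n) Unit}
    (hs : (lbPDS n hn).step (countConfig n i h s) v) : v = countConfig n i h (s + 1) := by
  obtain ⟨q, st⟩ := v
  rcases Nat.lt_or_ge s h with hlt | hge
  · obtain ⟨r, hr⟩ : ∃ r, h - s = r + 1 := ⟨h - s - 1, by omega⟩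
    simp only [PDS.step, countConfig, hr, List.replicate_succ, reduceCtorEq, lbPDS, lbDelta,
      ne_eq, Set.mem_ofPred_eq, Prod.mk.injEq, false_and, and_self, true_and, exists_false,
      QLB.cnt.injEq, and_false, ↓existsAndEq, not_false_eq_true, false_or, List.cons.injEq,
      or_false, exists_and_left, and_true, List.nil_append, exists_and_right, exists_eq_left',
      exists_const] at hs
    obtain ⟨⟨_, _, ⟨rfl, hj⟩, rfl⟩, rfl⟩ := hs
    obtain rfl := eq_of_heq hj
    simp only [countConfig, Prod.mk.injEq, QLB.cnt.injEq, heq_eq_eq, Fin.mk.injEq, true_and]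
    rw [Nat.mod_add_mod, min_eq_left hlt.le, min_eq_left hlt, show h - (s + 1) = r by omega]
    exact ⟨rfl, rfl⟩
  · simp only [PDS.step, countConfig, Nat.sub_eq_zero_of_le hge, List.replicate_zero, lbPDS,
      lbDelta, ne_eq, Set.mem_ofPred_eq, Prod.mk.injEq, reduceCtorEq, false_and, and_self,
      true_and, exists_false, QLB.cnt.injEq, and_false, ↓existsAndEq, not_false_eq_true, false_or,
      List.nil_eq, or_false] at hs
    simp [countConfig, hs, min_eq_right hge, Nat.sub_eq_zero_of_le (Nat.le_succ_of_le hge),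
      min_eq_right (Nat.le_succ_of_le hge)]

variable (n)

noncomputable def pushPlay (m : ℕ) : List (Config (QLB n) Unit) :=
  (List.range (m + 1)).map fun t => (QLB.qin, List.replicate t ())

noncomputable def boxPlay (m : ℕ) : List (Config (QLB n) Unit) :=
  pushPlay n m ++ [(QLB.qbox, List.replicate (m + 1) ())]

noncomputable def countPlay (i : Fin n) (m t : ℕ) : List (Config (QLB n) Unit) :=
  boxPlay n m ++ (List.range (t + 1)).map (countConfig n i (m + 1))

theorem pushPlay_succ (m : ℕ) :
    pushPlay n (m + 1) = pushPlay n m ++ [(QLB.qin, List.replicate (m + 1) ())] := by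
  rw [pushPlay, List.range_succ, List.map_append, ← pushPlay]
  rfl

theorem getLast?_pushPlay (m : ℕ) :
    (pushPlay n m).getLast? = some (QLB.qin, List.replicate m ()) := by
  simp [pushPlay, List.getLast?_range]

theorem countPlay_succ (i : Fin n) (m t : ℕ) :
    countPlay n i m (t + 1) = countPlay n i m t ++ [countConfig n i (m + 1) (t + 1)] := by
  rw [countPlay, countPlay, List.range_succ (n := t + 1), List.map_append, List.append_assoc]
  rfl

theorem getLast?_countPlay (i : Fin n) (m t : ℕ) :
    (countPlay n i m t).getLast? = some (countConfig n i (m + 1) t) := by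
  simp [countPlay, List.getLast?_range]

variable {n}

theorem lbPlay_cases {w : List (Config (QLB n) Unit)} (hne : w ≠ [])
    (hpath : FinPath ((lbPDS n hn).graph lbOwn) w)
    (hcons : FinConsistent ((lbPDS n hn).graph lbOwn) 1 (lbStrategy n hn) w) :
    (∃ m, w = pushPlay n m) ∨ (∃ m, w = boxPlay n m) ∨
      ∃ m t, w = countPlay n (lbChoice n hn (m + 1)) m t := by
  induction w using List.reverseRecOn with
  | nil => exact absurd rfl hne
  | append_singleton u v ih =>
    rcases eq_or_ne u [] with rfl | hu
    · left
      exact ⟨0, by simpa [FinPath, PDS.graph, lbPDS, pushPlay] using hpath.1⟩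
    have hpre : u <+: u ++ [v] := List.prefix_append u [v]
    rcases ih hu (hpath.of_prefix hpre hu) (hcons.of_prefix hpre) with
      ⟨m, rfl⟩ | ⟨m, rfl⟩ | ⟨m, t, rfl⟩
    · rcases lbStep_qin (hpath.step_of_getLast? (getLast?_pushPlay n m)) with rfl | rfl
      · exact Or.inl ⟨m + 1, (pushPlay_succ n m).symm⟩
      · exact Or.inr (Or.inl ⟨m, rfl⟩)
    · have hv := hcons.eq_of_getLast? (x := (QLB.qbox, List.replicate (m + 1) ()))
        (by simp [boxPlay]) rfl
      refine Or.inr (Or.inr ⟨m, 0, ?_⟩)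
      rw [hv, lbStrategy_qbox _ List.replicate_succ_ne_nil, List.length_replicate]
      simp [countPlay]
    · have hv := lbStep_countConfig (hpath.step_of_getLast? (getLast?_countPlay n _ m t))
      exact Or.inr (Or.inr ⟨m, t + 1, by rw [countPlay_succ, hv]⟩)

theorem toCH_pushPlay (m : ℕ) : toCH lbCol (pushPlay n m) = risingWord (m + 1) := by
  unfold toCH pushPlay risingWord
  simp [Function.comp_def, lbCol]

theorem toCH_boxPlay (m : ℕ) : toCH lbCol (boxPlay n m) = risingWord (m + 2) := by
  rw [boxPlay, toCH, List.map_append, ← toCH, toCH_pushPlay, risingWord_succ (m + 1)]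
  simp [lbCol]

theorem toCH_countPlay (i : Fin n) (m t : ℕ) :
    toCH lbCol (countPlay n i m t) =
      peakWord (m + 1) (fun s => if min s (m + 1) % nthPrime i = 0 then 0 else 1) t := by
  rw [countPlay, toCH, List.map_append, ← toCH, toCH_boxPlay, peakWord, List.map_map]
  simp [Function.comp_def, countConfig, lbCol]

theorem StairSc_zero_toCH_le_one {w : List (Config (QLB n) Unit)} (hne : w ≠ [])
    (hpath : FinPath ((lbPDS n hn).graph lbOwn) w)
    (hcons : FinConsistent ((lbPDS n hn).graph lbOwn) 1 (lbStrategy n hn) w)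
    (hw : MaxStairSc 1 (toCH lbCol w.dropLast) < ∏ i ∈ Finset.range n, nthPrime i) :
    StairSc 0 (toCH lbCol w) ≤ 1 := by
  rcases lbPlay_cases hne hpath hcons with ⟨m, rfl⟩ | ⟨m, rfl⟩ | ⟨m, t, rfl⟩
  · simp [toCH_pushPlay, StairSc_risingWord]
  · simp [toCH_boxPlay, StairSc_risingWord]
  · -- the color-`1` score `m + 2` at `q_□` forces `m + 1 < k_n`
    have hbox : boxPlay n m <+: (countPlay n (lbChoice n hn (m + 1)) m t).dropLast := by
      rw [countPlay, List.dropLast_append_of_ne_nil (by simp)]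
      exact List.prefix_append _ _
    have hm := StairSc_toCH_le_MaxStairSc (col := lbCol) (c := 1) hbox
    rw [toCH_boxPlay, StairSc_risingWord, if_pos rfl] at hm
    have hndvd := lbChoice_not_dvd n hn (Nat.succ_pos m) (by omega)
    rw [toCH_countPlay]
    refine (StairSc_zero_peakWord (by simp) (fun s hs => ?_) t).le
    rw [min_eq_right hs.le, if_neg (mt Nat.dvd_of_mod_eq_zero hndvd)]
    exact one_ne_zero

theorem MaxStairSc_zero_toCH_le_one {w : List (Config (QLB n) Unit)}
    (hpath : FinPath ((lbPDS n hn).graph lbOwn) w)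
    (hcons : FinConsistent ((lbPDS n hn).graph lbOwn) 1 (lbStrategy n hn) w)
    (hw : MaxStairSc 1 (toCH lbCol w.dropLast) < ∏ i ∈ Finset.range n, nthPrime i) :
    MaxStairSc 0 (toCH lbCol w) ≤ 1 := by
  refine MaxStairSc_le_iff.mpr fun v hv => ?_
  obtain ⟨u, hu, rfl⟩ := List.prefix_map_iff.mp hv
  rcases eq_or_ne u [] with rfl | hne
  · simp [StairSc]
  have hdrop : u.dropLast <+: w.dropLast := by
    obtain ⟨t, rfl⟩ := hu
    rcases eq_or_ne t [] with rfl | ht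
    · simp
    · rw [List.dropLast_append_of_ne_nil ht]
      exact (List.dropLast_prefix u).trans (List.prefix_append u _)
  exact StairSc_zero_toCH_le_one hne (hpath.of_prefix hu hne) (hcons.of_prefix hu)
    ((MaxStairSc_mono (hdrop.map _)).trans_lt hw)

theorem one_le_MaxStairSc_one_toCH {w : List (Config (QLB n) Unit)}
    (hpath : FinPath ((lbPDS n hn).graph lbOwn) w) : 1 ≤ MaxStairSc 1 (toCH lbCol w) := by
  obtain ⟨w', hw'⟩ := List.head?_eq_some_iff.mp hpath.1
  have hpre : pushPlay n 0 <+: w := by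
    rw [hw']
    exact List.prefix_append [_] w'
  have h := StairSc_toCH_le_MaxStairSc (col := lbCol) (c := 1) hpre
  rwa [toCH_pushPlay, StairSc_risingWord, if_pos rfl] at h

end LowerBoundGame

theorem stmt17_general (n : ℕ) (hn : 1 ≤ n) (k : ℕ)
    (hk2 : k ≤ ∏ i ∈ Finset.range n, nthPrime i) :
    FTPDWins (lbPDS n hn) lbOwn lbCol 2 k 1 := by
  refine ⟨lbStrategy n hn, lbStrategy_isStrategy n hn, ?_⟩
  rintro w ⟨hpath, ⟨c, hc, hck⟩, hdrop⟩ hcons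
  have hdrop1 : MaxStairSc 1 (toCH lbCol w.dropLast) < k := hdrop 1 one_lt_two
  have hle : MaxStairSc 1 (toCH lbCol w) ≤ k := by
    have := MaxStairSc_le_MaxStairSc_dropLast_add_one 1 (toCH lbCol w)
    rw [← toCH_dropLast] at this
    omega
  have hpos := one_le_MaxStairSc_one_toCH hpath
  have hzero := MaxStairSc_zero_toCH_le_one hpath hcons (hdrop1.trans_le hk2)
  refine ⟨1, one_lt_two, ?_, rfl⟩
  interval_cases c <;> omega

/-- For every threshold `k` with `1 ≤ k ≤ k_n = p_1 ⬝ ... ⬝ p_n`, Player 1 wins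
the finite-time pushdown game `(G_n, col_n, k)` of the lower-bound family. -/
theorem stmt17 (n : ℕ) (hn : 1 ≤ n) (k : ℕ) (hk1 : 1 ≤ k)
    (hk2 : k ≤ ∏ i ∈ Finset.range n, nthPrime i) :
    FTPDWins (lbPDS n hn) lbOwn lbCol 2 k 1 :=
  stmt17_general n hn k hk2

end FDGames
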